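/- arXiv:1805.03407 — 5 statements merged into one kernel-verified Lean document; each statement's English description precedes it below -/
import Mathlib

section
/- Suppose hypothesis (H1) holds, let z̄ = (S̄,ȳ⁰,ȳ,ν̄,φ̄⁰,φ̄) be a feasible extended sense process, and let (p₀,p,π,λ) be a multiplier set for z̄. If λ·(∂h/∂v)(ȳ⁰(0),ȳ(0),ȳ⁰(S̄),ȳ(S̄),ν̄(S̄)) = 0 and ν̄(S̄) < K, then π = 0. -/
open Filter MeasureTheory Set Topology
open scoped Topology RealInnerProductSpace NNReal

noncomputable section

/-- `ℝ^k` with the Euclidean norm. -/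
abbrev En (k : ℕ) : Type := EuclideanSpace ℝ (Fin k)

/-- The limiting normal cone of a set `D` at a point `z`, defined with respect to a
pairing `pair` (in our applications, the Euclidean inner product of the ambient space):
`N_D(z) = {p | ∃ zᵢ →_D z, pᵢ → p, limsup_{z' →_D zᵢ} pᵢ⬝(z'-zᵢ)/|z'-zᵢ| ≤ 0 for each i}`. -/
def limNC {E : Type*} [AddCommGroup E] [TopologicalSpace E]
    (pair : E → E → ℝ) (D : Set E) (z : E) : Set E :=
  {p | ∃ zs ps : ℕ → E, (∀ i, zs i ∈ D) ∧
    Tendsto zs atTop (𝓝 z) ∧ Tendsto ps atTop (𝓝 p) ∧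
    ∀ i, Filter.limsup
      (fun z' => pair (ps i) (z' - zs i) / Real.sqrt (pair (z' - zs i) (z' - zs i)))
      (𝓝[D \ {zs i}] (zs i)) ≤ 0}

/-- Euclidean pairing on `ℝ × ℝⁿ × ℝ × ℝⁿ`. -/
def pair4 {n : ℕ} (a b : ℝ × En n × ℝ × En n) : ℝ :=
  a.1 * b.1 + ⟪a.2.1, b.2.1⟫ + a.2.2.1 * b.2.2.1 + ⟪a.2.2.2, b.2.2.2⟫

/-- Euclidean pairing on `ℝ × ℝⁿ × ℝ × ℝⁿ × ℝ`. -/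
def pair5 {n : ℕ} (a b : ℝ × En n × ℝ × En n × ℝ) : ℝ :=
  a.1 * b.1 + ⟪a.2.1, b.2.1⟫ + a.2.2.1 * b.2.2.1 + ⟪a.2.2.2.1, b.2.2.2.1⟫ +
    a.2.2.2.2 * b.2.2.2.2

/-- `C` is a closed convex cone. -/
def IsClosedConvexCone {k : ℕ} (C : Set (En k)) : Prop :=
  IsClosed C ∧ Convex ℝ C ∧ ∀ c : ℝ, 0 ≤ c → ∀ w ∈ C, c • w ∈ C

/-- Hypothesis (H1)(i): the vector fields `f, g₁, …, g_m` are `C¹` and have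
sublinear growth `|f(t,x)| + Σ_j |g_j(t,x)| ≤ A|x| + B`. -/
def HypH1i {n m : ℕ} (f : ℝ × En n → En n) (g : Fin m → ℝ × En n → En n) : Prop :=
  ContDiff ℝ 1 f ∧ (∀ j, ContDiff ℝ 1 (g j)) ∧
  ∃ A B : ℝ, 0 < A ∧ 0 < B ∧
    ∀ (t : ℝ) (x : En n), ‖f (t, x)‖ + ∑ j, ‖g j (t, x)‖ ≤ A * ‖x‖ + B

/-- Hypothesis (H1): (H1)(i) together with: `h` is `C¹` and nondecreasing in the
total-variation variable `v`. -/
def HypH1 {n m : ℕ} (f : ℝ × En n → En n) (g : Fin m → ℝ × En n → En n)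
    (h : ℝ × En n × ℝ × En n × ℝ → ℝ) : Prop :=
  HypH1i f g ∧ ContDiff ℝ 1 h ∧
  ∀ (t1 : ℝ) (x1 : En n) (t2 : ℝ) (x2 : En n),
    Monotone (fun v => h (t1, x1, t2, x2, v))

/-- A strict sense process `(t₁,t₂,x,v,u)`: `x,v,u` are `W^{1,1}` on `[t₁,t₂]`
(encoded by integrable a.e. derivatives `x',v',u'` and the integral representation),
`du/dt ∈ 𝒞` a.e., `dx/dt = f(t,x) + Σ_j g_j(t,x) du^j/dt` and `dv/dt = |du/dt|` a.e.
The functions are extended to all of `ℝ`, constant outside `[t₁,t₂]`. -/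
structure StrictProcess (n m : ℕ) (C : Set (En m))
    (f : ℝ × En n → En n) (g : Fin m → ℝ × En n → En n) where
  t1 : ℝ
  t2 : ℝ
  x : ℝ → En n
  v : ℝ → ℝ
  u : ℝ → En m
  x' : ℝ → En n
  v' : ℝ → ℝ
  u' : ℝ → En m
  ht : t1 < t2
  hx'int : IntervalIntegrable x' volume t1 t2
  hv'int : IntervalIntegrable v' volume t1 t2
  hu'int : IntervalIntegrable u' volume t1 t2
  hxac : ∀ t ∈ Icc t1 t2, x t = x t1 + ∫ τ in t1..t, x' τ
  hvac : ∀ t ∈ Icc t1 t2, v t = v t1 + ∫ τ in t1..t, v' τ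
  huac : ∀ t ∈ Icc t1 t2, u t = u t1 + ∫ τ in t1..t, u' τ
  hcone : ∀ᵐ t ∂(volume : Measure ℝ), t ∈ Icc t1 t2 → u' t ∈ C
  hode : ∀ᵐ t ∂(volume : Measure ℝ), t ∈ Icc t1 t2 →
    x' t = f (t, x t) + ∑ j, u' t j • g j (t, x t)
  hvar : ∀ᵐ t ∂(volume : Measure ℝ), t ∈ Icc t1 t2 → v' t = ‖u' t‖
  hxconstl : ∀ t ≤ t1, x t = x t1
  hxconstr : ∀ t, t2 ≤ t → x t = x t2
  hvconstl : ∀ t ≤ t1, v t = v t1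
  hvconstr : ∀ t, t2 ≤ t → v t = v t2

/-- An extended sense process `(S,y⁰,y,ν,φ⁰,φ)`: Lipschitz functions on `[0,S]`
satisfying a.e. `dy⁰/ds = dφ⁰/ds`, `dy/ds = f(y⁰,y)dφ⁰/ds + Σ_j g_j(y⁰,y)dφ^j/ds`,
`dν/ds = |dφ/ds|` and `(dφ⁰/ds, dφ/ds) ∈ 𝐂 = {(w⁰,w) ∈ ℝ₊ × 𝒞 : w⁰ + |w| = 1}`.
The state functions `y, ν` are extended to all of `ℝ`, constant outside `[0,S]`. -/
structure ExtProcess (n m : ℕ) (C : Set (En m))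
    (f : ℝ × En n → En n) (g : Fin m → ℝ × En n → En n) where
  S : ℝ
  hS : 0 ≤ S
  y0 : ℝ → ℝ
  y : ℝ → En n
  nu : ℝ → ℝ
  phi0 : ℝ → ℝ
  phi : ℝ → En m
  y0' : ℝ → ℝ
  y' : ℝ → En n
  nu' : ℝ → ℝ
  phi0' : ℝ → ℝ
  phi' : ℝ → En m
  lip : ∃ L : ℝ≥0, LipschitzOnWith L
    (fun s => (y0 s, y s, nu s, phi0 s, phi s)) (Icc 0 S)
  hy0int : IntervalIntegrable y0' volume 0 S
  hyint : IntervalIntegrable y' volume 0 S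
  hnuint : IntervalIntegrable nu' volume 0 S
  hphi0int : IntervalIntegrable phi0' volume 0 S
  hphiint : IntervalIntegrable phi' volume 0 S
  hy0ac : ∀ s ∈ Icc 0 S, y0 s = y0 0 + ∫ r in (0:ℝ)..s, y0' r
  hyac : ∀ s ∈ Icc 0 S, y s = y 0 + ∫ r in (0:ℝ)..s, y' r
  hnuac : ∀ s ∈ Icc 0 S, nu s = nu 0 + ∫ r in (0:ℝ)..s, nu' r
  hphi0ac : ∀ s ∈ Icc 0 S, phi0 s = phi0 0 + ∫ r in (0:ℝ)..s, phi0' r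
  hphiac : ∀ s ∈ Icc 0 S, phi s = phi 0 + ∫ r in (0:ℝ)..s, phi' r
  heqy0 : ∀ᵐ s ∂(volume : Measure ℝ), s ∈ Icc 0 S → y0' s = phi0' s
  heqy : ∀ᵐ s ∂(volume : Measure ℝ), s ∈ Icc 0 S →
    y' s = phi0' s • f (y0 s, y s) + ∑ j, phi' s j • g j (y0 s, y s)
  heqnu : ∀ᵐ s ∂(volume : Measure ℝ), s ∈ Icc 0 S → nu' s = ‖phi' s‖
  hcone : ∀ᵐ s ∂(volume : Measure ℝ), s ∈ Icc 0 S →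
    0 ≤ phi0' s ∧ phi' s ∈ C ∧ phi0' s + ‖phi' s‖ = 1
  hyconstl : ∀ s ≤ (0:ℝ), y s = y 0
  hyconstr : ∀ s, S ≤ s → y s = y S
  hnuconstl : ∀ s ≤ (0:ℝ), nu s = nu 0
  hnuconstr : ∀ s, S ≤ s → nu s = nu S

variable {n m : ℕ} {C : Set (En m)}
  {f : ℝ × En n → En n} {g : Fin m → ℝ × En n → En n}

/-- Feasibility of a strict sense process: `v(t₁)=0`, `v(t₂) ≤ K`,
`(t₁,x(t₁),t₂,x(t₂)) ∈ 𝒯`. -/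
def StrictFeasible (K : EReal) (T : Set (ℝ × En n × ℝ × En n))
    (P : StrictProcess n m C f g) : Prop :=
  P.v P.t1 = 0 ∧ (P.v P.t2 : EReal) ≤ K ∧ (P.t1, P.x P.t1, P.t2, P.x P.t2) ∈ T

/-- Feasibility of an extended sense process: `ν(0)=0`, `ν(S) ≤ K`,
`(y⁰(0),y(0),y⁰(S),y(S)) ∈ 𝒯`. -/
def ExtFeasible (K : EReal) (T : Set (ℝ × En n × ℝ × En n))
    (Q : ExtProcess n m C f g) : Prop :=
  Q.nu 0 = 0 ∧ (Q.nu Q.S : EReal) ≤ K ∧ (Q.y0 0, Q.y 0, Q.y0 Q.S, Q.y Q.S) ∈ T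

/-- The cost of a strict sense process. -/
def Jstrict (h : ℝ × En n × ℝ × En n × ℝ → ℝ) (P : StrictProcess n m C f g) : ℝ :=
  h (P.t1, P.x P.t1, P.t2, P.x P.t2, P.v P.t2)

/-- The endpoint data `(y⁰(0),y(0),y⁰(S),y(S),ν(S))` of an extended process. -/
def endptExt (Q : ExtProcess n m C f g) : ℝ × En n × ℝ × En n × ℝ :=
  (Q.y0 0, Q.y 0, Q.y0 Q.S, Q.y Q.S, Q.nu Q.S)

/-- The cost of an extended sense process. -/
def Jext (h : ℝ × En n × ℝ × En n × ℝ → ℝ) (Q : ExtProcess n m C f g) : ℝ :=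
  h (endptExt Q)

/-- The distance `d_∞((a,b,x,v),(a',b',x',v')) = |a-a'| + |b-b'| + ‖(x,v)-(x',v')‖_{L^∞(ℝ)}`. -/
def dInfty {n : ℕ} (a b : ℝ) (x : ℝ → En n) (v : ℝ → ℝ)
    (a' b' : ℝ) (x' : ℝ → En n) (v' : ℝ → ℝ) : ℝ :=
  |a - a'| + |b - b'| + ⨆ t : ℝ, Real.sqrt (‖x t - x' t‖ ^ 2 + (v t - v' t) ^ 2)

/-- The distance `d_∞((y⁰(0),y⁰(S),y,ν), (ȳ⁰(0),ȳ⁰(S̄),ȳ,ν̄))` between the trajectories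
of two extended sense processes. -/
def dExt (Q Qb : ExtProcess n m C f g) : ℝ :=
  dInfty (Q.y0 0) (Q.y0 Q.S) Q.y Q.nu (Qb.y0 0) (Qb.y0 Qb.S) Qb.y Qb.nu

/-- The time-reparameterization map `σ(t) = ∫_{t₁}^t (1 + |du/dτ|) dτ` of a strict
sense process. -/
def sigmaMap (P : StrictProcess n m C f g) : ℝ → ℝ :=
  fun t => ∫ τ in P.t1..t, (1 + ‖P.u' τ‖)

/-- `Q = ℐ(P)`: the extended sense process `Q` is the embedding of the strict sense
process `P`, i.e. `S = σ(t₂)` and `(y⁰,y,ν,φ⁰,φ) ∘ σ = (id,x,v,id,u)` on `[t₁,t₂]`. -/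
def IsEmbedding (P : StrictProcess n m C f g) (Q : ExtProcess n m C f g) : Prop :=
  Q.S = sigmaMap P P.t2 ∧
  ∀ t ∈ Icc P.t1 P.t2,
    Q.y0 (sigmaMap P t) = t ∧ Q.y (sigmaMap P t) = P.x t ∧
    Q.nu (sigmaMap P t) = P.v t ∧ Q.phi0 (sigmaMap P t) = t ∧
    Q.phi (sigmaMap P t) = P.u t

/-- The extension `𝒯 × [0,K]` of the target set, as a subset of `ℝ × ℝⁿ × ℝ × ℝⁿ × ℝ`. -/
def targetExt (K : EReal) (T : Set (ℝ × En n × ℝ × En n)) :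
    Set (ℝ × En n × ℝ × En n × ℝ) :=
  {z | (z.1, z.2.1, z.2.2.1, z.2.2.2.1) ∈ T ∧ 0 ≤ z.2.2.2.2 ∧ (z.2.2.2.2 : EReal) ≤ K}

/-- `(p₀,p,π,λ)` is a multiplier set for the feasible extended sense process `Q`:
`(p₀,p) ∈ W^{1,1}([0,S];ℝ^{1+n})`, `π ≤ 0 ≤ λ`, `(p₀,p,λ) ≠ (0,0,0)`, and the adjoint
equations, the maximum condition (with zero maximized Hamiltonian) and the transversality
condition `(p₀(0),p(0),-p₀(S),-p(S),-π) ∈ λ∇h(ē) + N_{𝒯×[0,K]}(ē)` hold. -/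
def IsMultiplier (K : EReal) (T : Set (ℝ × En n × ℝ × En n))
    (h : ℝ × En n × ℝ × En n × ℝ → ℝ) (Q : ExtProcess n m C f g)
    (p0 : ℝ → ℝ) (p : ℝ → En n) (pi lam : ℝ) : Prop :=
  pi ≤ 0 ∧ 0 ≤ lam ∧
  ¬ ((∀ s ∈ Icc (0:ℝ) Q.S, p0 s = 0 ∧ p s = 0) ∧ lam = 0) ∧
  ∃ (p0' : ℝ → ℝ) (p' : ℝ → En n),
    IntervalIntegrable p0' volume 0 Q.S ∧ IntervalIntegrable p' volume 0 Q.S ∧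
    (∀ s ∈ Icc (0:ℝ) Q.S, p0 s = p0 0 + ∫ r in (0:ℝ)..s, p0' r) ∧
    (∀ s ∈ Icc (0:ℝ) Q.S, p s = p 0 + ∫ r in (0:ℝ)..s, p' r) ∧
    -- adjoint equation for p₀
    (∀ᵐ s ∂(volume : Measure ℝ), s ∈ Icc (0:ℝ) Q.S →
      p0' s = -(⟪p s, fderiv ℝ f (Q.y0 s, Q.y s) (1, 0)⟫ * Q.phi0' s
        + ∑ j, ⟪p s, fderiv ℝ (g j) (Q.y0 s, Q.y s) (1, 0)⟫ * Q.phi' s j)) ∧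
    -- adjoint equation for p
    (∀ᵐ s ∂(volume : Measure ℝ), s ∈ Icc (0:ℝ) Q.S → ∀ w : En n,
      ⟪p' s, w⟫ = -(⟪p s, fderiv ℝ f (Q.y0 s, Q.y s) (0, w)⟫ * Q.phi0' s
        + ∑ j, ⟪p s, fderiv ℝ (g j) (Q.y0 s, Q.y s) (0, w)⟫ * Q.phi' s j)) ∧
    -- maximum condition: the Hamiltonian attains its maximum 0 along the process
    (∀ᵐ s ∂(volume : Measure ℝ), s ∈ Icc (0:ℝ) Q.S →
      (⟪p s, Q.phi0' s • f (Q.y0 s, Q.y s) + ∑ j, Q.phi' s j • g j (Q.y0 s, Q.y s)⟫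
        + p0 s * Q.phi0' s + pi * ‖Q.phi' s‖ = 0) ∧
      (∀ (w0 : ℝ) (w : En m), 0 ≤ w0 → w ∈ C → w0 + ‖w‖ = 1 →
        ⟪p s, w0 • f (Q.y0 s, Q.y s) + ∑ j, w j • g j (Q.y0 s, Q.y s)⟫
          + p0 s * w0 + pi * ‖w‖ ≤ 0)) ∧
    -- transversality condition
    (∃ q ∈ limNC pair5 (targetExt K T) (endptExt Q),
      ∀ d : ℝ × En n × ℝ × En n × ℝ,
        pair5 ((p0 0, p 0, -p0 Q.S, -p Q.S, -pi) - q) d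
          = lam * fderiv ℝ h (endptExt Q) d)

/-- `Q` is an extended sense extremal: it admits a multiplier set. -/
def IsExtremal (K : EReal) (T : Set (ℝ × En n × ℝ × En n))
    (h : ℝ × En n × ℝ × En n × ℝ → ℝ) (Q : ExtProcess n m C f g) : Prop :=
  ∃ p0 p pi lam, IsMultiplier K T h Q p0 p pi lam

/-- `Q` is a normal extended sense extremal: it is an extremal and every multiplier
set for it has cost multiplier `λ > 0`. -/
def NormalExtremal (K : EReal) (T : Set (ℝ × En n × ℝ × En n))
    (h : ℝ × En n × ℝ × En n × ℝ → ℝ) (Q : ExtProcess n m C f g) : Prop :=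
  IsExtremal K T h Q ∧
  ∀ p0 p pi lam, IsMultiplier K T h Q p0 p pi lam → 0 < lam

/-- Extended sense `L^∞` (global) minimizer. -/
def ExtGlobalMin (K : EReal) (T : Set (ℝ × En n × ℝ × En n))
    (h : ℝ × En n × ℝ × En n × ℝ → ℝ) (Qb : ExtProcess n m C f g) : Prop :=
  ExtFeasible K T Qb ∧ ∀ Q : ExtProcess n m C f g, ExtFeasible K T Q →
    Jext h Qb ≤ Jext h Q

/-- Extended sense `L^∞` local minimizer. -/
def ExtLocalMin (K : EReal) (T : Set (ℝ × En n × ℝ × En n))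
    (h : ℝ × En n × ℝ × En n × ℝ → ℝ) (Qb : ExtProcess n m C f g) : Prop :=
  ExtFeasible K T Qb ∧ ∃ δ > (0:ℝ), ∀ Q : ExtProcess n m C f g, ExtFeasible K T Q →
    dExt Q Qb ≤ δ → Jext h Qb ≤ Jext h Q

/-- Strict sense `L^∞` local minimizer. -/
def StrictLocalMin (K : EReal) (T : Set (ℝ × En n × ℝ × En n))
    (h : ℝ × En n × ℝ × En n × ℝ → ℝ) (Pb : StrictProcess n m C f g) : Prop :=
  StrictFeasible K T Pb ∧ ∃ δ > (0:ℝ), ∀ P : StrictProcess n m C f g,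
    StrictFeasible K T P →
    dInfty P.t1 P.t2 P.x P.v Pb.t1 Pb.t2 Pb.x Pb.v ≤ δ → Jstrict h Pb ≤ Jstrict h P

/-- A feasible extended sense process is isolated: for some `δ > 0` no feasible embedded
strict sense process lies within distance `δ` of it. -/
def IsolatedProcess (K : EReal) (T : Set (ℝ × En n × ℝ × En n))
    (Qb : ExtProcess n m C f g) : Prop :=
  ∃ δ > (0:ℝ), ¬ ∃ (P : StrictProcess n m C f g) (Q : ExtProcess n m C f g),
    IsEmbedding P Q ∧ ExtFeasible K T Q ∧ dExt Q Qb < δ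

variable (C) (f) (g) in
/-- No infimum gap: the infimum of the extended cost over feasible extended sense
processes coincides with the infimum of the cost over feasible strict sense processes. -/
def NoInfGap (K : EReal) (T : Set (ℝ × En n × ℝ × En n))
    (h : ℝ × En n × ℝ × En n × ℝ → ℝ) : Prop :=
  sInf {c : ℝ | ∃ Q : ExtProcess n m C f g, ExtFeasible K T Q ∧ Jext h Q = c} =
  sInf {c : ℝ | ∃ P : StrictProcess n m C f g, StrictFeasible K T P ∧ Jstrict h P = c}

/-- No local infimum gap at `Qb`: for some `δ > 0` the cost of `Qb` equals the infimum
of the cost over feasible strict sense processes whose embeddings lie within distance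
`δ` of `Qb`. -/
def NoLocalInfGap (K : EReal) (T : Set (ℝ × En n × ℝ × En n))
    (h : ℝ × En n × ℝ × En n × ℝ → ℝ) (Qb : ExtProcess n m C f g) : Prop :=
  ∃ δ > (0:ℝ), Jext h Qb =
    sInf {c : ℝ | ∃ (P : StrictProcess n m C f g) (Q : ExtProcess n m C f g),
      IsEmbedding P Q ∧ StrictFeasible K T P ∧ dExt Q Qb < δ ∧ Jstrict h P = c}

variable (C) in
/-- Quick 1-controllability of the control system w.r.t. the target `𝒯` at a point
`(t₁,x₁,t₂,x₂) ∈ 𝒯`: for every limiting normal `ζ` with `ζ_{x₂} ≠ 0`,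
`inf_{w ∈ 𝒞} ζ_{x₂} ⬝ Σ_j g_j(t₂,x₂) wʲ < 0`. -/
def QuickControllable (g : Fin m → ℝ × En n → En n)
    (T : Set (ℝ × En n × ℝ × En n)) (e : ℝ × En n × ℝ × En n) : Prop :=
  ∀ ζ ∈ limNC pair4 T e, ζ.2.2.2 ≠ (0 : En n) →
    ∃ w ∈ C, ⟪ζ.2.2.2, ∑ j, w j • g j (e.2.2.1, e.2.2.2)⟫ < 0

/-- Drift controllability of the control system w.r.t. the target `𝒯` at a point
`(t₁,x₁,t₂,x₂) ∈ 𝒯`: for every limiting normal `ζ` with `ζ_{x₂} ≠ 0`,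
`ζ_{x₂} ⬝ f(t₂,x₂) < 0`. -/
def DriftControllable (f : ℝ × En n → En n)
    (T : Set (ℝ × En n × ℝ × En n)) (e : ℝ × En n × ℝ × En n) : Prop :=
  ∀ ζ ∈ limNC pair4 T e, ζ.2.2.2 ≠ (0 : En n) →
    ⟪ζ.2.2.2, f (e.2.2.1, e.2.2.2)⟫ < 0


section AuxPiZero

variable {n : ℕ}

lemma pair5_self_eq (v : ℝ × En n × ℝ × En n × ℝ) :
    pair5 v v = v.1^2 + ‖v.2.1‖^2 + v.2.2.1^2 + ‖v.2.2.2.1‖^2 + v.2.2.2.2^2 := by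
  simp only [pair5, real_inner_self_eq_norm_sq]; ring

lemma pair5_self_nonneg (v : ℝ × En n × ℝ × En n × ℝ) : 0 ≤ pair5 v v := by
  rw [pair5_self_eq]; positivity

lemma pair5_le_bound (P v : ℝ × En n × ℝ × En n × ℝ) :
    pair5 P v ≤ (|P.1| + ‖P.2.1‖ + |P.2.2.1| + ‖P.2.2.2.1‖ + |P.2.2.2.2|)
      * Real.sqrt (pair5 v v) := by
  set s := Real.sqrt (pair5 v v) with hs
  have hvv := pair5_self_eq v
  have hsnn : 0 ≤ s := Real.sqrt_nonneg _
  have h1 : |v.1| ≤ s := by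
    rw [← Real.sqrt_sq_eq_abs, hs]
    apply Real.sqrt_le_sqrt; nlinarith [norm_nonneg v.2.1, norm_nonneg v.2.2.2.1,
      sq_nonneg v.2.2.1, sq_nonneg v.2.2.2.2]
  have h2 : ‖v.2.1‖ ≤ s := by
    rw [← Real.sqrt_sq (norm_nonneg v.2.1), hs]
    apply Real.sqrt_le_sqrt; nlinarith [norm_nonneg v.2.2.2.1, sq_nonneg v.1,
      sq_nonneg v.2.2.1, sq_nonneg v.2.2.2.2]
  have h3 : |v.2.2.1| ≤ s := by
    rw [← Real.sqrt_sq_eq_abs, hs]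
    apply Real.sqrt_le_sqrt; nlinarith [norm_nonneg v.2.1, norm_nonneg v.2.2.2.1,
      sq_nonneg v.1, sq_nonneg v.2.2.2.2]
  have h4 : ‖v.2.2.2.1‖ ≤ s := by
    rw [← Real.sqrt_sq (norm_nonneg v.2.2.2.1), hs]
    apply Real.sqrt_le_sqrt; nlinarith [norm_nonneg v.2.1, sq_nonneg v.1,
      sq_nonneg v.2.2.1, sq_nonneg v.2.2.2.2]
  have h5 : |v.2.2.2.2| ≤ s := by
    rw [← Real.sqrt_sq_eq_abs, hs]
    apply Real.sqrt_le_sqrt; nlinarith [norm_nonneg v.2.1, norm_nonneg v.2.2.2.1,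
      sq_nonneg v.1, sq_nonneg v.2.2.1]
  have t1 : P.1 * v.1 ≤ |P.1| * s := by
    calc P.1 * v.1 ≤ |P.1 * v.1| := le_abs_self _
      _ = |P.1| * |v.1| := abs_mul _ _
      _ ≤ |P.1| * s := by
          exact mul_le_mul_of_nonneg_left h1 (abs_nonneg _)
  have t2 : ⟪P.2.1, v.2.1⟫ ≤ ‖P.2.1‖ * s :=
    (real_inner_le_norm _ _).trans (mul_le_mul_of_nonneg_left h2 (norm_nonneg _))
  have t3 : P.2.2.1 * v.2.2.1 ≤ |P.2.2.1| * s := by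
    calc P.2.2.1 * v.2.2.1 ≤ |P.2.2.1 * v.2.2.1| := le_abs_self _
      _ = |P.2.2.1| * |v.2.2.1| := abs_mul _ _
      _ ≤ |P.2.2.1| * s := mul_le_mul_of_nonneg_left h3 (abs_nonneg _)
  have t4 : ⟪P.2.2.2.1, v.2.2.2.1⟫ ≤ ‖P.2.2.2.1‖ * s :=
    (real_inner_le_norm _ _).trans (mul_le_mul_of_nonneg_left h4 (norm_nonneg _))
  have t5 : P.2.2.2.2 * v.2.2.2.2 ≤ |P.2.2.2.2| * s := by
    calc P.2.2.2.2 * v.2.2.2.2 ≤ |P.2.2.2.2 * v.2.2.2.2| := le_abs_self _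
      _ = |P.2.2.2.2| * |v.2.2.2.2| := abs_mul _ _
      _ ≤ |P.2.2.2.2| * s := mul_le_mul_of_nonneg_left h5 (abs_nonneg _)
  have : pair5 P v = P.1 * v.1 + ⟪P.2.1, v.2.1⟫ + P.2.2.1 * v.2.2.1
      + ⟪P.2.2.2.1, v.2.2.2.1⟫ + P.2.2.2.2 * v.2.2.2.2 := rfl
  rw [this]; ring_nf; nlinarith [t1, t2, t3, t4, t5]

lemma pair5_quot_le (P v : ℝ × En n × ℝ × En n × ℝ) :
    pair5 P v / Real.sqrt (pair5 v v)
      ≤ |P.1| + ‖P.2.1‖ + |P.2.2.1| + ‖P.2.2.2.1‖ + |P.2.2.2.2| := by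
  set M := |P.1| + ‖P.2.1‖ + |P.2.2.1| + ‖P.2.2.2.1‖ + |P.2.2.2.2| with hM
  have hM0 : 0 ≤ M := by positivity
  rcases eq_or_lt_of_le (Real.sqrt_nonneg (pair5 v v)) with hz | hz
  · rw [← hz, div_zero]; exact hM0
  · rw [div_le_iff₀ hz]; exact pair5_le_bound P v

/-- If the last (total-variation) component of the base point is strictly below `K`,
then the last component of any limiting normal to `𝒯 × [0,K]` is nonpositive. -/
lemma limNC_last_nonpos {K : EReal} {T : Set (ℝ × En n × ℝ × En n)}
    {z q : ℝ × En n × ℝ × En n × ℝ}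
    (hq : q ∈ limNC pair5 (targetExt K T) z) (hz : (z.2.2.2.2 : EReal) < K) :
    q.2.2.2.2 ≤ 0 := by
  obtain ⟨zs, ps, hzsD, hzs, hps, hls⟩ := hq
  obtain ⟨r, hzr, hrK⟩ := EReal.exists_between_coe_real hz
  have hzr' : z.2.2.2.2 < r := by exact_mod_cast hzr
  have hcont : Continuous fun w : ℝ × En n × ℝ × En n × ℝ => w.2.2.2.2 := by fun_prop
  have hproj : Tendsto (fun i => (zs i).2.2.2.2) atTop (𝓝 z.2.2.2.2) :=
    (hcont.tendsto z).comp hzs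
  have hev : ∀ᶠ i in atTop, (zs i).2.2.2.2 < r := hproj.eventually_lt_const hzr'
  have key : ∀ i, (zs i).2.2.2.2 < r → (ps i).2.2.2.2 ≤ 0 := by
    intro i hir
    set w := zs i with hw
    set P := ps i with hP
    have hwD : w ∈ targetExt K T := hzsD i
    set u : (ℝ × En n × ℝ × En n × ℝ) → ℝ :=
      fun z' => pair5 P (z' - w) / Real.sqrt (pair5 (z' - w) (z' - w)) with hu
    set δ := r - w.2.2.2.2 with hδ
    have hδ0 : 0 < δ := sub_pos.2 hir
    set γ : ℝ → ℝ × En n × ℝ × En n × ℝ :=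
      fun ε => (w.1, w.2.1, w.2.2.1, w.2.2.2.1, w.2.2.2.2 + ε) with hγ
    have hsub : ∀ ε : ℝ, γ ε - w = ((0:ℝ), (0:En n), (0:ℝ), (0:En n), ε) := by
      intro ε
      have : γ ε - w = ((γ ε).1 - w.1, (γ ε).2.1 - w.2.1, (γ ε).2.2.1 - w.2.2.1,
          (γ ε).2.2.2.1 - w.2.2.2.1, (γ ε).2.2.2.2 - w.2.2.2.2) := rfl
      rw [this]; simp [hγ]
    have hγu : ∀ ε ∈ Ioo (0:ℝ) δ, u (γ ε) = P.2.2.2.2 := by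
      intro ε hε
      have hε0 : 0 < ε := hε.1
      have h1 : pair5 P (((0:ℝ), (0:En n), (0:ℝ), (0:En n), ε)) = P.2.2.2.2 * ε := by
        simp [pair5]
      have h2 : pair5 (((0:ℝ), (0:En n), (0:ℝ), (0:En n), ε))
          (((0:ℝ), (0:En n), (0:ℝ), (0:En n), ε)) = ε * ε := by
        simp [pair5]
      rw [hu]; simp only [hsub ε, h1, h2, Real.sqrt_mul_self hε0.le]
      field_simp
    have hγmem : ∀ ε ∈ Ioo (0:ℝ) δ, γ ε ∈ targetExt K T \ {w} := by
      intro ε hε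
      obtain ⟨hT', hnn, hle⟩ := hwD
      constructor
      · refine ⟨hT', by simp only [hγ]; linarith [hε.1], ?_⟩
        have h5 : w.2.2.2.2 + ε < r := by
          have := hε.2; rw [hδ] at this; linarith
        calc ((w.2.2.2.2 + ε : ℝ) : EReal) ≤ (r : EReal) := by exact_mod_cast h5.le
          _ ≤ K := hrK.le
      · intro hmem
        have : (γ ε).2.2.2.2 = w.2.2.2.2 := by rw [hmem]
        simp only [hγ] at this
        linarith [hε.1]
    have hFne : (𝓝[Ioo (0:ℝ) δ] 0).NeBot := by
      apply mem_closure_iff_nhdsWithin_neBot.mp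
      rw [closure_Ioo hδ0.ne]
      exact ⟨le_refl _, hδ0.le⟩
    have hγtend : Tendsto γ (𝓝[Ioo (0:ℝ) δ] 0) (𝓝[targetExt K T \ {w}] w) := by
      rw [tendsto_nhdsWithin_iff]
      constructor
      · have hc : Continuous γ := by fun_prop
        have := (hc.tendsto 0).mono_left (nhdsWithin_le_nhds (s := Ioo (0:ℝ) δ))
        simpa [hγ] using this
      · filter_upwards [self_mem_nhdsWithin] with ε hε using hγmem ε hε
    set M := |P.1| + ‖P.2.1‖ + |P.2.2.1| + ‖P.2.2.2.1‖ + |P.2.2.2.2| with hMdef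
    have hb : Filter.IsBoundedUnder (· ≤ ·) (𝓝[targetExt K T \ {w}] w) u :=
      Filter.isBoundedUnder_of ⟨M, fun z' => pair5_quot_le P (z' - w)⟩
    have hfreq : ∃ᶠ z' in 𝓝[targetExt K T \ {w}] w, P.2.2.2.2 ≤ u z' := by
      intro hcon
      have h1 : ∀ᶠ ε in 𝓝[Ioo (0:ℝ) δ] 0, ¬ (P.2.2.2.2 ≤ u (γ ε)) :=
        hγtend.eventually hcon
      have h2 : ∀ᶠ ε in 𝓝[Ioo (0:ℝ) δ] 0, ε ∈ Ioo (0:ℝ) δ := self_mem_nhdsWithin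
      obtain ⟨ε, hε1, hε2⟩ := (h1.and h2).exists
      exact hε1 (by rw [hγu ε hε2])
    have hlim := le_limsup_of_frequently_le hfreq hb
    calc P.2.2.2.2
        ≤ Filter.limsup u (𝓝[targetExt K T \ {w}] w) := hlim
      _ ≤ 0 := hls i
  have hevle : ∀ᶠ i in atTop, (ps i).2.2.2.2 ≤ 0 := hev.mono key
  have hpq : Tendsto (fun i => (ps i).2.2.2.2) atTop (𝓝 q.2.2.2.2) :=
    (hcont.tendsto q).comp hps
  exact le_of_tendsto hpq hevle

end AuxPiZero

/-- Under hypothesis (H1), if `(p₀,p,π,λ)` is a multiplier set for a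
feasible extended sense process `z̄` and `λ·(∂h/∂v)(ē) = 0` and `ν̄(S̄) < K`,
then `π = 0`. -/
theorem multiplier_pi_eq_zero
    {n m : ℕ} (C : Set (En m)) (K : EReal) (T : Set (ℝ × En n × ℝ × En n))
    (f : ℝ × En n → En n) (g : Fin m → ℝ × En n → En n)
    (h : ℝ × En n × ℝ × En n × ℝ → ℝ)
    (hC : IsClosedConvexCone C) (hT : IsClosed T) (hK : (0 : EReal) < K)
    (hH1 : HypH1 f g h)
    (Qbar : ExtProcess n m C f g)
    (hfeas : ExtFeasible K T Qbar)
    (p0 : ℝ → ℝ) (p : ℝ → En n) (pi lam : ℝ)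
    (hmult : IsMultiplier K T h Qbar p0 p pi lam)
    (hdv : lam * fderiv ℝ h (endptExt Qbar) (0, 0, 0, 0, 1) = 0)
    (hnu : (Qbar.nu Qbar.S : EReal) < K) :
    pi = 0 := by
  obtain ⟨hpi, hlam, hnt, p0', p', hi1, hi2, hac1, hac2, hadj0, hadj, hmax,
    q, hqNC, htrans⟩ := hmult
  have hq5 : q.2.2.2.2 ≤ 0 := by
    refine limNC_last_nonpos hqNC ?_
    show ((Qbar.nu Qbar.S : ℝ) : EReal) < K
    exact hnu
  have hd := htrans ((0 : ℝ), (0 : En n), (0 : ℝ), (0 : En n), (1 : ℝ))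
  have hlhs : pair5 (((p0 0, p 0, -p0 Qbar.S, -p Qbar.S, -pi) :
      ℝ × En n × ℝ × En n × ℝ) - q) ((0 : ℝ), (0 : En n), (0 : ℝ), (0 : En n), (1 : ℝ))
      = -pi - q.2.2.2.2 := by
    set a : ℝ × En n × ℝ × En n × ℝ := (p0 0, p 0, -p0 Qbar.S, -p Qbar.S, -pi) with ha
    have hsub : a - q = (a.1 - q.1, a.2.1 - q.2.1, a.2.2.1 - q.2.2.1,
        a.2.2.2.1 - q.2.2.2.1, a.2.2.2.2 - q.2.2.2.2) := rfl
    rw [hsub]; simp [pair5, ha]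
  rw [hlhs, hdv] at hd
  linarith
end
end

section
/- Suppose hypothesis (H1) holds, let z̄ = (S̄,ȳ⁰,ȳ,ν̄,φ̄⁰,φ̄) be a feasible extended sense process, and let (p₀,p,π,λ) be a multiplier set for z̄. If ȳ⁰(0) < ȳ⁰(S̄), then (p,λ) ≠ (0,0). -/
open Filter MeasureTheory Set Topology
open scoped Topology RealInnerProductSpace NNReal

noncomputable section

variable {n m : ℕ} {C : Set (En m)}
  {f : ℝ × En n → En n} {g : Fin m → ℝ × En n → En n}

/-- Under hypothesis (H1), if `(p₀,p,π,λ)` is a multiplier set for a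
feasible extended sense process `z̄` and `ȳ⁰(0) < ȳ⁰(S̄)`, then `(p,λ) ≠ (0,0)`. -/
theorem multiplier_p_lambda_nontrivial
    {n m : ℕ} (C : Set (En m)) (K : EReal) (T : Set (ℝ × En n × ℝ × En n))
    (f : ℝ × En n → En n) (g : Fin m → ℝ × En n → En n)
    (h : ℝ × En n × ℝ × En n × ℝ → ℝ)
    (hC : IsClosedConvexCone C) (hT : IsClosed T) (hK : (0 : EReal) < K)
    (hH1 : HypH1 f g h)
    (Qbar : ExtProcess n m C f g)
    (hfeas : ExtFeasible K T Qbar)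
    (p0 : ℝ → ℝ) (p : ℝ → En n) (pi lam : ℝ)
    (hmult : IsMultiplier K T h Qbar p0 p pi lam)
    (hy0 : Qbar.y0 0 < Qbar.y0 Qbar.S) :
    ¬ ((∀ s ∈ Set.Icc (0:ℝ) Qbar.S, p s = 0) ∧ lam = 0) := by
  rintro ⟨hp, hlam⟩
  obtain ⟨hpi, hlamge, hnontriv, p0', p', hi0, hi, hp0ac, hpac, hadj0, hadj, hmax, htrans⟩ :=
    hmult
  -- `p0'` vanishes a.e. on `[0,S]` since `p ≡ 0` there
  have hp0'zero : ∀ᵐ r ∂(volume : Measure ℝ), r ∈ Icc (0:ℝ) Qbar.S → p0' r = 0 := by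
    filter_upwards [hadj0] with r hr hrmem
    rw [hr hrmem, hp r hrmem]
    simp
  -- hence `p0` is constant on `[0,S]`
  have hp0const : ∀ s ∈ Icc (0:ℝ) Qbar.S, p0 s = p0 0 := by
    intro s hs
    rw [hp0ac s hs]
    have hz : ∫ r in (0:ℝ)..s, p0' r = ∫ r in (0:ℝ)..s, (0:ℝ) := by
      apply intervalIntegral.integral_congr_ae
      filter_upwards [hp0'zero] with r h1 h2
      rw [Set.uIoc_of_le hs.1] at h2
      exact h1 ⟨h2.1.le, h2.2.trans hs.2⟩
    rw [hz]
    simp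
  -- the constant value is nonzero by nontriviality
  have hc0 : p0 0 ≠ 0 := by
    intro hc
    exact hnontriv ⟨fun s hs => ⟨by rw [hp0const s hs, hc], hp s hs⟩, hlam⟩
  -- a.e. on `[0,S]`, `φ0' s ≤ 0`
  have hae : ∀ᵐ s ∂(volume : Measure ℝ), s ∈ Icc (0:ℝ) Qbar.S → Qbar.phi0' s ≤ 0 := by
    filter_upwards [hmax, Qbar.hcone] with s hm hcn hs
    obtain ⟨heq, hineq⟩ := hm hs
    obtain ⟨hpos, hmem, hsum⟩ := hcn hs
    by_contra hgt
    push_neg at hgt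
    have h0C : (0 : En m) ∈ C := by
      have := hC.2.2 0 le_rfl _ hmem
      simpa using this
    have hle : p0 s ≤ 0 := by
      have := hineq 1 0 zero_le_one h0C (by simp)
      simpa [hp s hs] using this
    have heq' : p0 s * Qbar.phi0' s + pi * ‖Qbar.phi' s‖ = 0 := by
      simpa [hp s hs] using heq
    have hge : (0:ℝ) ≤ p0 s := by
      nlinarith [norm_nonneg (Qbar.phi' s), mul_nonpos_of_nonpos_of_nonneg hpi
        (norm_nonneg (Qbar.phi' s))]
    exact hc0 (by rw [← hp0const s hs]; linarith)
  -- so the interval integral of `φ0'` is ≤ 0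
  have hint_le : (∫ s in (0:ℝ)..Qbar.S, Qbar.phi0' s) ≤ 0 := by
    have hnn : (0:ℝ) ≤ ∫ s in (0:ℝ)..Qbar.S, -Qbar.phi0' s := by
      refine intervalIntegral.integral_nonneg_of_ae_restrict Qbar.hS ?_
      rw [Filter.EventuallyLE, ae_restrict_iff' measurableSet_Icc]
      filter_upwards [hae] with s h1 h2
      simpa using h1 h2
    rw [intervalIntegral.integral_neg] at hnn
    linarith
  -- but it equals `y0(S) - y0(0) > 0`
  have heqint : (∫ s in (0:ℝ)..Qbar.S, Qbar.phi0' s)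
      = ∫ s in (0:ℝ)..Qbar.S, Qbar.y0' s := by
    apply intervalIntegral.integral_congr_ae
    filter_upwards [Qbar.heqy0] with s h1 h2
    rw [Set.uIoc_of_le Qbar.hS] at h2
    exact (h1 ⟨h2.1.le, h2.2⟩).symm
  have hval := Qbar.hy0ac Qbar.S ⟨Qbar.hS, le_refl _⟩
  rw [heqint] at hint_le
  linarith
end
end

section
/- Suppose hypothesis (H1) holds. Let z̄ = (S̄,ȳ⁰,ȳ,ν̄,φ̄⁰,φ̄) be an extended sense L^∞ local minimizer for (P_e) which is not isolated. Then there is no local infimum gap at z̄. -/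
open Filter MeasureTheory Set Topology
open scoped Topology RealInnerProductSpace NNReal

noncomputable section

variable {n m : ℕ} {C : Set (En m)}
  {f : ℝ × En n → En n} {g : Fin m → ℝ × En n → En n}

lemma embed_endpoints (P : StrictProcess n m C f g) (Q : ExtProcess n m C f g)
    (hE : IsEmbedding P Q) :
    Q.y0 0 = P.t1 ∧ Q.y 0 = P.x P.t1 ∧ Q.nu 0 = P.v P.t1 ∧
    Q.y0 Q.S = P.t2 ∧ Q.y Q.S = P.x P.t2 ∧ Q.nu Q.S = P.v P.t2 := by
  have h0 : sigmaMap P P.t1 = 0 := intervalIntegral.integral_same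
  have h1 := hE.2 P.t1 ⟨le_rfl, P.ht.le⟩
  have h2 := hE.2 P.t2 ⟨P.ht.le, le_rfl⟩
  rw [h0] at h1
  rw [← hE.1] at h2
  exact ⟨h1.1, h1.2.1, h1.2.2.1, h2.1, h2.2.1, h2.2.2.1⟩

lemma ext_bdd (Q : ExtProcess n m C f g) :
    ∃ M : ℝ, ∀ t, ‖Q.y t‖ ≤ M ∧ |Q.nu t| ≤ M := by
  obtain ⟨L, hL⟩ := Q.lip
  have hcont : ContinuousOn (fun s => (Q.y0 s, Q.y s, Q.nu s, Q.phi0 s, Q.phi s))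
      (Icc 0 Q.S) := hL.continuousOn
  have hcy : ContinuousOn Q.y (Icc 0 Q.S) :=
    (continuous_fst.comp continuous_snd).comp_continuousOn hcont
  have hcn : ContinuousOn Q.nu (Icc 0 Q.S) :=
    (continuous_fst.comp (continuous_snd.comp continuous_snd)).comp_continuousOn hcont
  obtain ⟨M1, hM1⟩ := isCompact_Icc.exists_bound_of_continuousOn hcy
  obtain ⟨M2, hM2⟩ := isCompact_Icc.exists_bound_of_continuousOn hcn
  have key : ∀ t : ℝ, ∃ t' ∈ Icc (0:ℝ) Q.S, Q.y t = Q.y t' ∧ Q.nu t = Q.nu t' := by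
    intro t
    rcases le_or_gt t 0 with h | h
    · exact ⟨0, ⟨le_rfl, Q.hS⟩, Q.hyconstl t h, Q.hnuconstl t h⟩
    rcases le_or_gt Q.S t with h' | h'
    · exact ⟨Q.S, ⟨Q.hS, le_rfl⟩, Q.hyconstr t h', Q.hnuconstr t h'⟩
    · exact ⟨t, ⟨h.le, h'.le⟩, rfl, rfl⟩
  refine ⟨max M1 M2, fun t => ?_⟩
  obtain ⟨t', ht', hy, hn⟩ := key t
  constructor
  · rw [hy]; exact le_trans (hM1 t' ht') (le_max_left _ _)
  · rw [hn, ← Real.norm_eq_abs]; exact le_trans (hM2 t' ht') (le_max_right _ _)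

lemma dist_endpt_le (Q Qb : ExtProcess n m C f g) :
    dist (endptExt Q) (endptExt Qb) ≤ dExt Q Qb := by
  set Φ : ℝ → ℝ := fun t =>
    Real.sqrt (‖Q.y t - Qb.y t‖ ^ 2 + (Q.nu t - Qb.nu t) ^ 2) with hΦ
  obtain ⟨M, hM⟩ := ext_bdd Q
  obtain ⟨M', hM'⟩ := ext_bdd Qb
  have hbdd : BddAbove (Set.range Φ) := by
    refine ⟨M + M' + (M + M'), ?_⟩
    rintro x ⟨t, rfl⟩
    have h1 : ‖Q.y t - Qb.y t‖ ≤ M + M' :=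
      (norm_sub_le _ _).trans (add_le_add (hM t).1 (hM' t).1)
    have h2 : |Q.nu t - Qb.nu t| ≤ M + M' :=
      (abs_sub (Q.nu t) (Qb.nu t)).trans (add_le_add (hM t).2 (hM' t).2)
    have hs : Φ t ≤ ‖Q.y t - Qb.y t‖ + |Q.nu t - Qb.nu t| := by
      rw [hΦ]
      have : ‖Q.y t - Qb.y t‖ ^ 2 + (Q.nu t - Qb.nu t) ^ 2
          ≤ (‖Q.y t - Qb.y t‖ + |Q.nu t - Qb.nu t|) ^ 2 := by
        have := norm_nonneg (Q.y t - Qb.y t)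
        have := abs_nonneg (Q.nu t - Qb.nu t)
        nlinarith [sq_abs (Q.nu t - Qb.nu t)]
      calc Real.sqrt (‖Q.y t - Qb.y t‖ ^ 2 + (Q.nu t - Qb.nu t) ^ 2)
          ≤ Real.sqrt ((‖Q.y t - Qb.y t‖ + |Q.nu t - Qb.nu t|) ^ 2) :=
            Real.sqrt_le_sqrt this
        _ = ‖Q.y t - Qb.y t‖ + |Q.nu t - Qb.nu t| :=
            Real.sqrt_sq (add_nonneg (norm_nonneg _) (abs_nonneg _))
    exact hs.trans (add_le_add h1 h2)
  have hsup : ∀ t, Φ t ≤ ⨆ s, Φ s := fun t => le_ciSup hbdd t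
  have h0 : (0:ℝ) ≤ ⨆ s, Φ s := le_trans (Real.sqrt_nonneg _) (hsup 0)
  have hy : ∀ t, ‖Q.y t - Qb.y t‖ ≤ ⨆ s, Φ s := by
    intro t
    refine le_trans ?_ (hsup t)
    rw [hΦ]
    calc ‖Q.y t - Qb.y t‖ = Real.sqrt (‖Q.y t - Qb.y t‖ ^ 2) :=
          (Real.sqrt_sq (norm_nonneg _)).symm
      _ ≤ _ := Real.sqrt_le_sqrt (le_add_of_nonneg_right (sq_nonneg _))
  have hnu : ∀ t, |Q.nu t - Qb.nu t| ≤ ⨆ s, Φ s := by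
    intro t
    refine le_trans ?_ (hsup t)
    rw [hΦ]
    calc |Q.nu t - Qb.nu t| = Real.sqrt ((Q.nu t - Qb.nu t) ^ 2) :=
          (Real.sqrt_sq_eq_abs _).symm
      _ ≤ _ := Real.sqrt_le_sqrt (le_add_of_nonneg_left (sq_nonneg _))
  have hdE : dExt Q Qb = |Q.y0 0 - Qb.y0 0| + |Q.y0 Q.S - Qb.y0 Qb.S| + ⨆ s, Φ s := rfl
  have ha1 : (0:ℝ) ≤ |Q.y0 0 - Qb.y0 0| := abs_nonneg _
  have ha2 : (0:ℝ) ≤ |Q.y0 Q.S - Qb.y0 Qb.S| := abs_nonneg _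
  have heS : Q.y Q.S = Q.y (max Q.S Qb.S) := (Q.hyconstr _ (le_max_left _ _)).symm
  have heS' : Qb.y Qb.S = Qb.y (max Q.S Qb.S) := (Qb.hyconstr _ (le_max_right _ _)).symm
  have hnS : Q.nu Q.S = Q.nu (max Q.S Qb.S) := (Q.hnuconstr _ (le_max_left _ _)).symm
  have hnS' : Qb.nu Qb.S = Qb.nu (max Q.S Qb.S) := (Qb.hnuconstr _ (le_max_right _ _)).symm
  rw [endptExt, endptExt, Prod.dist_eq, Prod.dist_eq, Prod.dist_eq, Prod.dist_eq, hdE]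
  simp only [Real.dist_eq, dist_eq_norm, Real.norm_eq_abs]
  refine max_le (by linarith) (max_le ?_ (max_le (by linarith) (max_le ?_ ?_)))
  · have := hy 0; linarith
  · rw [heS, heS']; have := hy (max Q.S Qb.S); linarith
  · rw [hnS, hnS']; have := hnu (max Q.S Qb.S); linarith

/-- Under hypothesis (H1), if `z̄` is an extended sense `L^∞` local
minimizer for `(P_e)` which is not isolated, then there is no local infimum gap
at `z̄`. -/
theorem no_local_infimum_gap_of_not_isolated
    {n m : ℕ} (C : Set (En m)) (K : EReal) (T : Set (ℝ × En n × ℝ × En n))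
    (f : ℝ × En n → En n) (g : Fin m → ℝ × En n → En n)
    (h : ℝ × En n × ℝ × En n × ℝ → ℝ)
    (hC : IsClosedConvexCone C) (hT : IsClosed T) (hK : (0 : EReal) < K)
    (hH1 : HypH1 f g h)
    (Qbar : ExtProcess n m C f g)
    (hmin : ExtLocalMin K T h Qbar)
    (hniso : ¬ IsolatedProcess K T Qbar) :
    NoLocalInfGap K T h Qbar := by
  obtain ⟨hfeasb, δ₀, hδ₀, hminloc⟩ := hmin
  simp only [IsolatedProcess] at hniso
  push_neg at hniso
  refine ⟨δ₀, hδ₀, ?_⟩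
  set A : Set ℝ := {c : ℝ | ∃ (P : StrictProcess n m C f g) (Q : ExtProcess n m C f g),
      IsEmbedding P Q ∧ StrictFeasible K T P ∧ dExt Q Qbar < δ₀ ∧ Jstrict h P = c} with hA
  -- costs and feasibility transfer along the embedding
  have hcost : ∀ (P : StrictProcess n m C f g) (Q : ExtProcess n m C f g),
      IsEmbedding P Q → Jstrict h P = Jext h Q := by
    intro P Q hE
    obtain ⟨e1, e2, e3, e4, e5, e6⟩ := embed_endpoints P Q hE
    unfold Jstrict Jext endptExt
    rw [e1, e2, e4, e5, e6]
  have hfeas : ∀ (P : StrictProcess n m C f g) (Q : ExtProcess n m C f g),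
      IsEmbedding P Q → (StrictFeasible K T P ↔ ExtFeasible K T Q) := by
    intro P Q hE
    obtain ⟨e1, e2, e3, e4, e5, e6⟩ := embed_endpoints P Q hE
    unfold StrictFeasible ExtFeasible
    rw [e1, e2, e3, e4, e5, e6]
  -- lower bound: every element of A is ≥ Jext h Qbar
  have hlb : ∀ c ∈ A, Jext h Qbar ≤ c := by
    rintro c ⟨P, Q, hE, hPf, hd, rfl⟩
    have hQf : ExtFeasible K T Q := (hfeas P Q hE).mp hPf
    rw [hcost P Q hE]
    exact hminloc Q hQf hd.le
  -- nonempty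
  have hne : A.Nonempty := by
    obtain ⟨P, Q, hE, hQf, hd⟩ := hniso δ₀ hδ₀
    exact ⟨Jstrict h P, P, Q, hE, (hfeas P Q hE).mpr hQf, hd, rfl⟩
  have hbdd : BddBelow A := ⟨Jext h Qbar, hlb⟩
  -- upper bound
  have hub : ∀ ε : ℝ, 0 < ε → sInf A ≤ Jext h Qbar + ε := by
    intro ε hε
    obtain ⟨δ₂, hδ₂, hco⟩ := Metric.continuous_iff.mp hH1.2.1.continuous
      (endptExt Qbar) ε hε
    obtain ⟨P, Q, hE, hQf, hd⟩ := hniso (min δ₀ δ₂) (lt_min hδ₀ hδ₂)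
    have hdδ₀ : dExt Q Qbar < δ₀ := hd.trans_le (min_le_left _ _)
    have hdδ₂ : dist (endptExt Q) (endptExt Qbar) < δ₂ :=
      lt_of_le_of_lt (dist_endpt_le Q Qbar) (hd.trans_le (min_le_right _ _))
    have hclose : |Jext h Q - Jext h Qbar| < ε := by
      have := hco _ hdδ₂
      rwa [Real.dist_eq] at this
    have hmem : Jstrict h P ∈ A :=
      ⟨P, Q, hE, (hfeas P Q hE).mpr hQf, hdδ₀, rfl⟩
    have : Jstrict h P ≤ Jext h Qbar + ε := by
      rw [hcost P Q hE]
      have := abs_lt.mp hclose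
      linarith [this.2]
    exact (csInf_le hbdd hmem).trans this
  exact le_antisymm (le_csInf hne hlb) (le_of_forall_pos_le_add hub)
end
end

section
/- (Example 2, normality of the minimizer.) Let ȳ₁(s) = 1 for s ∈ [0,1] and ȳ₁(s) = 2−s for s ∈ [1,2], and ȳ₂ ≡ 0 on [0,2]. Let p₀ ∈ ℝ, λ ≥ 0, and (p₁,p₂,p₃) ∈ W^{1,1}([0,2];ℝ³) satisfy: dp₁/ds = 0 and dp₃/ds = 0 a.e.; dp₂/ds(s) = −p₂(s) for a.e. s ∈ [0,1] and dp₂/ds(s) = p₃(s) for a.e. s ∈ [1,2]; the transversality condition −(p₁,p₂,p₃)(2) = (−λ+α, β, γ) for some α, β, γ ≥ 0; and for a.e. s ∈ [0,2] the maximum condition p₀·χ_{[0,1]}(s) − p₁(s)·χ_{[1,2]}(s) = max over (w₀,w₁,w₂) with w₀ ≥ 0 and w₀ + |(w₁,w₂)| = 1 of { p₀w₀ + p₁(s)w₁ + p₂(s)(ȳ₂(s)w₀ + w₂) + p₃(s)(ȳ₂(s)w₁ − ȳ₁(s)w₂) } = 0. Then p₀ = 0, p₁ ≡ 0, p₂ ≡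 0, p₃ ≡ 0 and λ = α; in particular, if (p₁,p₂,p₃,λ) ≠ 0 then λ > 0. -/
/-!
Since the maximal value in the maximum condition is `0`, testing it on the controls
`(0, ±1, 0)` and `(0, 0, ±1)` gives `p₁ = 0` and `p₂ = ȳ₁ p₃` a.e. As `p₁` and `p₃` are constant,
on `[0,1]` the function `p₂` is a.e. equal to the constant `p₃`, while `p₂' = -p₂` makes it affine
with slope `-p₃`; so `p₃ = p₂(0) = 0`, and then `p₂' = 0` a.e. on `[0,2]`. At a point of `(0,1)` the
maximum condition reads `p₀ = 0`, and transversality at `s = 2` gives `λ = α`.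
-/

open MeasureTheory Set

noncomputable section

def chi (A : Set ℝ) (s : ℝ) : ℝ := A.indicator (fun _ => (1:ℝ)) s

lemma chi_of_mem {A : Set ℝ} {s : ℝ} (h : s ∈ A) : chi A s = 1 :=
  indicator_of_mem h _

lemma chi_of_notMem {A : Set ℝ} {s : ℝ} (h : s ∉ A) : chi A s = 0 :=
  indicator_of_notMem h _

lemma exists_mem_Ioo_of_ae {P : ℝ → Prop} (h : ∀ᵐ s ∂volume, P s) {a b : ℝ} (hab : a < b) :
    ∃ s ∈ Ioo a b, P s :=
  Measure.exists_mem_of_measure_ne_zero_of_ae (by simp [hab]) (ae_restrict_of_ae h)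

lemma eq_add_mul_sub_of_integral_of_ae_eq_const {f q : ℝ → ℝ} {a b c : ℝ}
    (hf : ∀ s ∈ Icc a b, f s = f a + ∫ r in a..s, q r)
    (hq : ∀ᵐ r ∂volume, r ∈ Icc a b → q r = c) :
    ∀ s ∈ Icc a b, f s = f a + c * (s - a) := by
  intro s hs
  rw [hf s hs, intervalIntegral.integral_congr_ae (g := fun _ => c), intervalIntegral.integral_const,
    smul_eq_mul, mul_comm]
  filter_upwards [hq] with r hr hmem
  rw [uIoc_of_le hs.1] at hmem
  exact hr ⟨hmem.1.le, hmem.2.trans hs.2⟩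

lemma eq_of_integral_of_ae_eq_zero {f q : ℝ → ℝ} {a b : ℝ}
    (hf : ∀ s ∈ Icc a b, f s = f a + ∫ r in a..s, q r)
    (hq : ∀ᵐ r ∂volume, r ∈ Icc a b → q r = 0) :
    ∀ s ∈ Icc a b, f s = f a := by
  simpa using eq_add_mul_sub_of_integral_of_ae_eq_const hf hq

lemma affine_coeffs_of_ae_eq_const {A B C a b : ℝ} (hab : a < b)
    (h : ∀ᵐ s ∂volume, s ∈ Ioo a b → A + B * s = C) : B = 0 ∧ A = C := by
  have ham : a < (a + b) / 2 := left_lt_add_div_two.2 hab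
  have hmb : (a + b) / 2 < b := add_div_two_lt_right.2 hab
  obtain ⟨s, hs, hsC⟩ := exists_mem_Ioo_of_ae h ham
  obtain ⟨t, ht, htC⟩ := exists_mem_Ioo_of_ae h hmb
  replace hsC := hsC ⟨hs.1, hs.2.trans hmb⟩
  replace htC := htC ⟨ham.trans ht.1, ht.2⟩
  have hB : B = 0 := by
    have : B * (t - s) = 0 := by linarith
    exact (mul_eq_zero.1 this).resolve_right (sub_ne_zero.2 (hs.2.trans ht.1).ne')
  exact ⟨hB, by simpa [hB] using hsC⟩

lemma coeffs_eq_zero_of_forall_control_le_zero {c0 c1 c2 : ℝ}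
    (h : ∀ w0 w1 w2 : ℝ, 0 ≤ w0 → w0 + √(w1 ^ 2 + w2 ^ 2) = 1 →
      c0 * w0 + c1 * w1 + c2 * w2 ≤ 0) :
    c1 = 0 ∧ c2 = 0 := by
  have h1 := h 0 1 0 le_rfl (by norm_num)
  have h2 := h 0 (-1) 0 le_rfl (by norm_num)
  have h3 := h 0 0 1 le_rfl (by norm_num)
  have h4 := h 0 0 (-1) le_rfl (by norm_num)
  constructor <;> linarith

lemma multipliers_of_zero_mem_upperBounds {p0 p1 p2 p3 y1 y2 : ℝ} (hy2 : y2 = 0)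
    (h : 0 ∈ upperBounds {val : ℝ | ∃ w0 w1 w2 : ℝ, 0 ≤ w0 ∧ w0 + √(w1 ^ 2 + w2 ^ 2) = 1 ∧
      val = p0 * w0 + p1 * w1 + p2 * (y2 * w0 + w2) + p3 * (y2 * w1 - y1 * w2)}) :
    p1 = 0 ∧ p2 = p3 * y1 := by
  obtain ⟨hp1, hp23⟩ := coeffs_eq_zero_of_forall_control_le_zero (c0 := p0) (c1 := p1)
    (c2 := p2 - p3 * y1) fun w0 w1 w2 hw0 hw => h ⟨w0, w1, w2, hw0, hw, by rw [hy2]; ring⟩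
  exact ⟨hp1, by linarith⟩

lemma p3_eq_zero_and_p2_eq_zero {ybar1 p2 p3 q2 : ℝ → ℝ}
    (hybar1 : ∀ s ∈ Icc (0:ℝ) 1, ybar1 s = 1)
    (hp2ac : ∀ s ∈ Icc (0:ℝ) 2, p2 s = p2 0 + ∫ r in (0:ℝ)..s, q2 r)
    (hp3 : ∀ s ∈ Icc (0:ℝ) 2, p3 s = p3 0)
    (hq2 : ∀ᵐ s ∂(volume : Measure ℝ),
      (s ∈ Icc (0:ℝ) 1 → q2 s = -(p2 s)) ∧ (s ∈ Icc (1:ℝ) 2 → q2 s = p3 s))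
    (hp2p3 : ∀ᵐ s ∂(volume : Measure ℝ), s ∈ Icc (0:ℝ) 2 → p2 s = p3 s * ybar1 s) :
    p3 0 = 0 ∧ ∀ s ∈ Icc (0:ℝ) 2, p2 s = 0 := by
  have hIcc : Icc (0:ℝ) 1 ⊆ Icc 0 2 := Icc_subset_Icc_right one_le_two
  have hp2_const : ∀ᵐ s ∂(volume : Measure ℝ), s ∈ Icc (0:ℝ) 1 → p2 s = p3 0 := by
    filter_upwards [hp2p3] with s hs hs01
    rw [hs (hIcc hs01), hp3 s (hIcc hs01), hybar1 s hs01, mul_one]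
  have hp2_affine : ∀ s ∈ Icc (0:ℝ) 1, p2 s = p2 0 + -p3 0 * (s - 0) :=
    eq_add_mul_sub_of_integral_of_ae_eq_const (fun s hs => hp2ac s (hIcc hs)) <| by
      filter_upwards [hq2, hp2_const] with s hq hp hs
      rw [hq.1 hs, hp hs]
  obtain ⟨hp30, hp20⟩ : -p3 0 = 0 ∧ p2 0 = p3 0 := affine_coeffs_of_ae_eq_const one_pos <| by
    filter_upwards [hp2_const] with s hs hs01
    have h := hs (Ioo_subset_Icc_self hs01)
    rwa [hp2_affine s (Ioo_subset_Icc_self hs01), sub_zero] at h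
  have hp30 : p3 0 = 0 := neg_eq_zero.1 hp30
  refine ⟨hp30, fun s hs => ?_⟩
  rw [eq_of_integral_of_ae_eq_zero hp2ac ?_ s hs, hp20, hp30]
  filter_upwards [hq2, hp2_const] with r hq hp hr
  rcases le_total r 1 with hr1 | hr1
  · rw [hq.1 ⟨hr.1, hr1⟩, hp ⟨hr.1, hr1⟩, hp30, neg_zero]
  · rw [hq.2 ⟨hr1, hr.2⟩, hp3 r hr, hp30]

theorem example2_normality_general
    (ybar1 ybar2 : ℝ → ℝ)
    (hybar1 : ∀ s, ybar1 s = if s ≤ 1 then 1 else 2 - s)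
    (hybar2 : ∀ s, ybar2 s = 0)
    (p0 lam : ℝ) (hlam : 0 ≤ lam)
    (p1 p2 p3 q1 q2 q3 : ℝ → ℝ)
    (hp1ac : ∀ s ∈ Icc (0:ℝ) 2, p1 s = p1 0 + ∫ r in (0:ℝ)..s, q1 r)
    (hp2ac : ∀ s ∈ Icc (0:ℝ) 2, p2 s = p2 0 + ∫ r in (0:ℝ)..s, q2 r)
    (hp3ac : ∀ s ∈ Icc (0:ℝ) 2, p3 s = p3 0 + ∫ r in (0:ℝ)..s, q3 r)
    (hq1 : ∀ᵐ s ∂(volume : Measure ℝ), s ∈ Icc (0:ℝ) 2 → q1 s = 0)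
    (hq3 : ∀ᵐ s ∂(volume : Measure ℝ), s ∈ Icc (0:ℝ) 2 → q3 s = 0)
    (hq2 : ∀ᵐ s ∂(volume : Measure ℝ),
      (s ∈ Icc (0:ℝ) 1 → q2 s = -(p2 s)) ∧ (s ∈ Icc (1:ℝ) 2 → q2 s = p3 s))
    (α β γ : ℝ)
    (htrans : (-(p1 2), -(p2 2), -(p3 2)) = (-lam + α, β, γ))
    (hmax : ∀ᵐ s ∂(volume : Measure ℝ), s ∈ Icc (0:ℝ) 2 →
      (p0 * chi (Icc 0 1) s - p1 s * chi (Icc 1 2) s = 0) ∧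
      IsGreatest
        {val : ℝ | ∃ w0 w1 w2 : ℝ, 0 ≤ w0 ∧ w0 + Real.sqrt (w1^2 + w2^2) = 1 ∧
          val = p0 * w0 + p1 s * w1 + p2 s * (ybar2 s * w0 + w2)
            + p3 s * (ybar2 s * w1 - ybar1 s * w2)}
        (p0 * chi (Icc 0 1) s - p1 s * chi (Icc 1 2) s)) :
    p0 = 0 ∧ (∀ s ∈ Icc (0:ℝ) 2, p1 s = 0 ∧ p2 s = 0 ∧ p3 s = 0) ∧ lam = α ∧
    (¬ ((∀ s ∈ Icc (0:ℝ) 2, p1 s = 0 ∧ p2 s = 0 ∧ p3 s = 0) ∧ lam = 0) →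
      0 < lam) := by
  have hp1 := eq_of_integral_of_ae_eq_zero hp1ac hq1
  have hp3 := eq_of_integral_of_ae_eq_zero hp3ac hq3
  have hkey : ∀ᵐ s ∂(volume : Measure ℝ), s ∈ Icc (0:ℝ) 2 →
      p0 * chi (Icc 0 1) s - p1 s * chi (Icc 1 2) s = 0 ∧ p1 s = 0 ∧ p2 s = p3 s * ybar1 s := by
    filter_upwards [hmax] with s hs hs02
    obtain ⟨hzero, hgreatest⟩ := hs hs02
    exact ⟨hzero, multipliers_of_zero_mem_upperBounds (hybar2 s) (hzero ▸ hgreatest.2)⟩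
  obtain ⟨hp30, hp2⟩ := p3_eq_zero_and_p2_eq_zero (fun s hs => by rw [hybar1, if_pos hs.2])
    hp2ac hp3 hq2 (hkey.mono fun s hs hs02 => (hs hs02).2.2)
  obtain ⟨t, ht, htkey⟩ := exists_mem_Ioo_of_ae hkey one_pos
  have ht02 : t ∈ Icc (0:ℝ) 2 := ⟨ht.1.le, ht.2.le.trans one_le_two⟩
  obtain ⟨hchi, hp1t, -⟩ := htkey ht02
  rw [chi_of_mem (Ioo_subset_Icc_self ht), chi_of_notMem fun h => ht.2.not_ge h.1] at hchi
  have hall : ∀ s ∈ Icc (0:ℝ) 2, p1 s = 0 ∧ p2 s = 0 ∧ p3 s = 0 := fun s hs =>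
    ⟨by rw [hp1 s hs, ← hp1 t ht02, hp1t], hp2 s hs, by rw [hp3 s hs, hp30]⟩
  have hlam_α : lam = α := by
    have h2 := (Prod.mk.inj htrans).1
    rw [(hall 2 ⟨zero_le_two, le_rfl⟩).1] at h2
    linarith
  refine ⟨by linarith, hall, hlam_α, fun hne => hlam.lt_of_ne fun h => hne ⟨hall, h.symm⟩⟩

/-- **Example 2, normality of the minimizer.**
With `ȳ₁ = χ_{[0,1]} + (2-s)χ_{(1,2]}`, `ȳ₂ ≡ 0`, any multipliers
`p₀ ∈ ℝ`, `λ ≥ 0`, `(p₁,p₂,p₃) ∈ W^{1,1}([0,2];ℝ³)` satisfying the adjoint equations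
`dp₁/ds = 0`, `dp₃/ds = 0`, `dp₂/ds = -p₂` on `[0,1]`, `dp₂/ds = p₃` on `[1,2]`,
the transversality condition `-(p₁,p₂,p₃)(2) = (-λ+α, β, γ)` with `α,β,γ ≥ 0`, and the
maximum condition, must satisfy `p₀ = 0`, `p₁ ≡ 0`, `p₂ ≡ 0`, `p₃ ≡ 0` and `λ = α`;
in particular if `(p₁,p₂,p₃,λ) ≠ 0` then `λ > 0`. -/
theorem example2_normality
    (ybar1 ybar2 : ℝ → ℝ)
    (hybar1 : ∀ s, ybar1 s = if s ≤ 1 then 1 else 2 - s)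
    (hybar2 : ∀ s, ybar2 s = 0)
    (p0 lam : ℝ) (hlam : 0 ≤ lam)
    (p1 p2 p3 q1 q2 q3 : ℝ → ℝ)
    (hq1int : IntervalIntegrable q1 volume 0 2)
    (hq2int : IntervalIntegrable q2 volume 0 2)
    (hq3int : IntervalIntegrable q3 volume 0 2)
    (hp1ac : ∀ s ∈ Icc (0:ℝ) 2, p1 s = p1 0 + ∫ r in (0:ℝ)..s, q1 r)
    (hp2ac : ∀ s ∈ Icc (0:ℝ) 2, p2 s = p2 0 + ∫ r in (0:ℝ)..s, q2 r)
    (hp3ac : ∀ s ∈ Icc (0:ℝ) 2, p3 s = p3 0 + ∫ r in (0:ℝ)..s, q3 r)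
    (hq1 : ∀ᵐ s ∂(volume : Measure ℝ), s ∈ Icc (0:ℝ) 2 → q1 s = 0)
    (hq3 : ∀ᵐ s ∂(volume : Measure ℝ), s ∈ Icc (0:ℝ) 2 → q3 s = 0)
    (hq2 : ∀ᵐ s ∂(volume : Measure ℝ),
      (s ∈ Icc (0:ℝ) 1 → q2 s = -(p2 s)) ∧ (s ∈ Icc (1:ℝ) 2 → q2 s = p3 s))
    (α β γ : ℝ) (hα : 0 ≤ α) (hβ : 0 ≤ β) (hγ : 0 ≤ γ)
    (htrans : (-(p1 2), -(p2 2), -(p3 2)) = (-lam + α, β, γ))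
    (hmax : ∀ᵐ s ∂(volume : Measure ℝ), s ∈ Icc (0:ℝ) 2 →
      (p0 * chi (Icc 0 1) s - p1 s * chi (Icc 1 2) s = 0) ∧
      IsGreatest
        {val : ℝ | ∃ w0 w1 w2 : ℝ, 0 ≤ w0 ∧ w0 + Real.sqrt (w1^2 + w2^2) = 1 ∧
          val = p0 * w0 + p1 s * w1 + p2 s * (ybar2 s * w0 + w2)
            + p3 s * (ybar2 s * w1 - ybar1 s * w2)}
        (p0 * chi (Icc 0 1) s - p1 s * chi (Icc 1 2) s)) :
    p0 = 0 ∧ (∀ s ∈ Icc (0:ℝ) 2, p1 s = 0 ∧ p2 s = 0 ∧ p3 s = 0) ∧ lam = α ∧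
    (¬ ((∀ s ∈ Icc (0:ℝ) 2, p1 s = 0 ∧ p2 s = 0 ∧ p3 s = 0) ∧ lam = 0) →
      0 < lam) :=
  example2_normality_general ybar1 ybar2 hybar1 hybar2 p0 lam hlam p1 p2 p3 q1 q2 q3 hp1ac hp2ac
    hp3ac hq1 hq3 hq2 α β γ htrans hmax
end
end

section
/- (Example 3, abnormality of the minimizer of the driftless problem.) Let ȳ₁(s) = 1 for s ∈ [0,1] and ȳ₁(s) = 2−s for s ∈ [1,2], and ȳ₂ ≡ 0 on [0,2]. Fix any γ > 0 and β > 2γ, and define p₀ = 0, p₁ ≡ 0, p₃ ≡ −γ, p₂(s) = γ−β for s ∈ [0,1] and p₂(s) = γ(2−s)−β for s ∈ [1,2], π = 0, λ = 0. Then: dp₁/ds = 0 and dp₃/ds = 0 a.e.; dp₂/ds(s) = 0 for a.e. s ∈ [0,1] and dp₂/ds(s) = p₃(s) for a.e. s ∈ [1,2]; the transversality condition −(p₁,p₂,p₃)(2) = (−λ+α, β, γ) holds with α = 0 and β, γ ≥ 0; and for a.e. s ∈ [0,2], p₀·χ_{[0,1]}(s) − p₁(s)·χ_{[1,2]}(s)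 = max over (w₀,w₁,w₂) with w₀ ≥ 0, w₂ ≥ 0 and w₀ + |(w₁,w₂)| = 1 of { p₀w₀ + p₁(s)w₁ + p₂(s)w₂ + p₃(s)(ȳ₂(s)w₁ − ȳ₁(s)w₂) } = 0. In particular (p₁,p₂,p₃) ≢ 0 and λ = 0, so the reference minimizer of the driftless problem is an abnormal extended sense extremal. -/
open MeasureTheory Set

noncomputable section

/-- **Example 3, abnormality of the minimizer of the driftless problem.**
With `ȳ₁ = χ_{[0,1]} + (2-s)χ_{(1,2]}`, `ȳ₂ ≡ 0`, and, for any `γ > 0`, `β > 2γ`, the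
multipliers `p₀ = 0`, `p₁ ≡ 0`, `p₃ ≡ -γ`, `p₂ = (γ-β)χ_{[0,1]} + (γ(2-s)-β)χ_{(1,2]}`,
`π = 0`, `λ = 0` satisfy the adjoint equations, the transversality condition (with
`α = 0`) and the maximum condition (over the cone `w₂ ≥ 0`), while `(p₁,p₂,p₃) ≢ 0`
and `λ = 0`: the reference minimizer of the driftless problem is an abnormal
extended sense extremal. -/
theorem example3_abnormality
    (γ β : ℝ) (hγ : 0 < γ) (hβ : 2 * γ < β)
    (ybar1 ybar2 : ℝ → ℝ)
    (hybar1 : ∀ s, ybar1 s = if s ≤ 1 then 1 else 2 - s)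
    (hybar2 : ∀ s, ybar2 s = 0)
    (p0 lam : ℝ) (p1 p2 p3 : ℝ → ℝ)
    (hp0 : p0 = 0) (hlam : lam = 0)
    (hp1 : ∀ s, p1 s = 0)
    (hp3 : ∀ s, p3 s = -γ)
    (hp2 : ∀ s, p2 s = if s ≤ 1 then γ - β else γ * (2 - s) - β) :
    (∀ᵐ s ∂(volume : Measure ℝ), s ∈ Icc (0:ℝ) 2 →
      HasDerivAt p1 0 s ∧ HasDerivAt p3 0 s) ∧
    (∀ᵐ s ∂(volume : Measure ℝ), s ∈ Icc (0:ℝ) 1 → HasDerivAt p2 0 s) ∧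
    (∀ᵐ s ∂(volume : Measure ℝ), s ∈ Icc (1:ℝ) 2 → HasDerivAt p2 (p3 s) s) ∧
    ((-(p1 2), -(p2 2), -(p3 2)) = (-lam + 0, β, γ)) ∧
    (∀ᵐ s ∂(volume : Measure ℝ), s ∈ Icc (0:ℝ) 2 →
      (p0 * chi (Icc 0 1) s - p1 s * chi (Icc 1 2) s = 0) ∧
      IsGreatest
        {val : ℝ | ∃ w0 w1 w2 : ℝ, 0 ≤ w0 ∧ 0 ≤ w2 ∧
          w0 + Real.sqrt (w1^2 + w2^2) = 1 ∧
          val = p0 * w0 + p1 s * w1 + p2 s * w2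
            + p3 s * (ybar2 s * w1 - ybar1 s * w2)}
        (p0 * chi (Icc 0 1) s - p1 s * chi (Icc 1 2) s)) ∧
    (¬ ∀ s ∈ Icc (0:ℝ) 2, p1 s = 0 ∧ p2 s = 0 ∧ p3 s = 0) ∧
    lam = 0 := by
  have hp1' : p1 = fun _ => (0:ℝ) := funext hp1
  have hp3' : p3 = fun _ => -γ := funext hp3
  have hne : ∀ᵐ s : ℝ ∂volume, s ≠ (1:ℝ) := by
    have : (volume : Measure ℝ) {(1:ℝ)} = 0 := measure_singleton 1
    rw [ae_iff]; simp only [not_ne_iff, setOf_eq_eq_singleton]; exact this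
  refine ⟨?_, ?_, ?_, ?_, ?_, ?_, hlam⟩
  · filter_upwards with s _
    exact ⟨hp1' ▸ hasDerivAt_const s 0, hp3' ▸ hasDerivAt_const s (-γ)⟩
  · filter_upwards [hne] with s hs hmem
    have hlt : s < 1 := lt_of_le_of_ne hmem.2 hs
    have : HasDerivAt (fun _ : ℝ => γ - β) 0 s := hasDerivAt_const s _
    refine this.congr_of_eventuallyEq ?_
    filter_upwards [Iio_mem_nhds hlt] with t ht
    rw [hp2 t, if_pos ht.le]
  · filter_upwards [hne] with s hs hmem
    have hlt : 1 < s := lt_of_le_of_ne hmem.1 (Ne.symm hs)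
    rw [hp3]
    have h1 : HasDerivAt (fun t : ℝ => γ * (2 - t) - β) (-γ) s := by
      have := (((hasDerivAt_id s).const_sub 2).const_mul γ).sub_const β
      simpa using this
    refine h1.congr_of_eventuallyEq ?_
    filter_upwards [Ioi_mem_nhds hlt] with t ht
    rw [hp2 t, if_neg (not_le.mpr ht)]
  · have h2 : p2 2 = -β := by rw [hp2 2]; norm_num
    simp [hp1 2, h2, hp3 2, hlam]
  · filter_upwards with s hmem
    have hval : p0 * chi (Icc 0 1) s - p1 s * chi (Icc 1 2) s = 0 := by
      simp [hp0, hp1 s]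
    refine ⟨hval, ?_⟩
    rw [hval]
    constructor
    · exact ⟨1, 0, 0, by norm_num, le_refl 0, by simp, by rw [hp0]; ring⟩
    · rintro v ⟨w0, w1, w2, hw0, hw2, hsum, rfl⟩
      have hrw : p0 * w0 + p1 s * w1 + p2 s * w2 + p3 s * (ybar2 s * w1 - ybar1 s * w2)
          = (p2 s + γ * ybar1 s) * w2 := by
        rw [hp0, hp1 s, hp3 s, hybar2 s]; ring
      rw [hrw]
      have hcoef : p2 s + γ * ybar1 s ≤ 2 * γ - β := by
        rw [hp2 s, hybar1 s]
        by_cases h : s ≤ 1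
        · rw [if_pos h, if_pos h]; linarith
        · rw [if_neg h, if_neg h]
          push_neg at h
          nlinarith [mul_nonneg hγ.le (sub_nonneg.mpr h.le)]
      nlinarith
  · intro h
    have := (h 1 ⟨by norm_num, by norm_num⟩).2.2
    rw [hp3 1] at this
    exact absurd this (neg_ne_zero.mpr hγ.ne')
end
end
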